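/- Consider the zero-sum game on ℝ² with cost f(x,y) = (1/2)(x² + 2xy + (1/10)y²), whose simultaneous-gradient vector field is ω(x,y) = (x + y, -(x + (1/10)y)). Then: (i) for every fixed y₀ ∈ ℝ, every differentiable function x : ℝ → ℝ satisfying x'(t) = -(x(t) + y₀) for all t ≥ 0 converges to -y₀ as t → ∞; (ii) every differentiable function y : ℝ → ℝ satisfying y'(t) = -(9/10)·y(t) for all t ≥ 0 (the slow dynamics ẏ = ω₂(-y, y) obtained by substituting the fast-timescale limit x = -y) converges to 0 as t → ∞; and (iii) the resulting limit point (0,0) is not a local Nash equilibrium of the game: for every δ > 0 there exists y with |y| < δ and f(0,y) > f(0,0). -/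

import Mathlib

/-!
Both dynamics are linear equations `u' = -c (u - a)` with `c > 0`: the integrating factor
`e^{ct}` makes `e^{ct} (u t - a)` constant, so `u t - a` decays exponentially. The limit
`(0, 0)` is not a local Nash equilibrium because `fCounter 0 y = y² / 20` is strictly
minimized, not maximized, at `y = 0`, so the maximizing player profits from any deviation.
-/

open Filter Real Topology

noncomputable def fCounter (x y : ℝ) : ℝ := (1 / 2) * (x ^ 2 + 2 * x * y + (1 / 10) * y ^ 2)

lemma mul_exp_eq_of_deriv_eq_neg_mul {c : ℝ} {u : ℝ → ℝ} (hu : Differentiable ℝ u)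
    (hode : ∀ t, 0 ≤ t → deriv u t = -c * u t) {t : ℝ} (ht : 0 ≤ t) :
    u t * exp (c * t) = u 0 := by
  have hderiv : ∀ s, 0 ≤ s → HasDerivAt (fun s => u s * exp (c * s)) 0 s := by
    intro s hs
    have hexp : HasDerivAt (fun s => exp (c * s)) (exp (c * s) * c) s :=
      ((hasDerivAt_id s).const_mul c).exp.congr_deriv (by simp)
    refine ((hu s).hasDerivAt.mul hexp).congr_deriv ?_
    rw [hode s hs]
    ring
  have hconst := constant_of_has_deriv_right_zero (a := 0) (b := t)
    (fun s hs => (hderiv s hs.1).continuousAt.continuousWithinAt)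
    (fun s hs => (hderiv s hs.1).hasDerivWithinAt) t ⟨ht, le_rfl⟩
  simpa using hconst

theorem tendsto_of_deriv_eq_neg_mul_sub {c a : ℝ} (hc : 0 < c) {u : ℝ → ℝ}
    (hu : Differentiable ℝ u) (hode : ∀ t, 0 ≤ t → deriv u t = -c * (u t - a)) :
    Tendsto u atTop (𝓝 a) := by
  have hv : ∀ t, 0 ≤ t → (u t - a) * exp (c * t) = u 0 - a :=
    fun t ht => mul_exp_eq_of_deriv_eq_neg_mul (hu.sub_const a)
      (fun s hs => by rw [deriv_sub_const, hode s hs]) ht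
  have hdecay : Tendsto (fun t => (u 0 - a) * exp (-(c * t)) + a) atTop (𝓝 a) := by
    have hexp := tendsto_exp_atBot.comp
      (tendsto_neg_atTop_atBot.comp (tendsto_id.const_mul_atTop hc))
    simpa using (hexp.const_mul (u 0 - a)).add_const a
  refine hdecay.congr' ?_
  filter_upwards [eventually_ge_atTop 0] with t ht
  rw [← hv t ht, exp_neg, mul_inv_cancel_right₀ (exp_ne_zero _), sub_add_cancel]

/-- Appendix B: two-timescale simultaneous gradient descent on the counterexample game
converges to the non-Nash critical point `(0, 0)`: the fast dynamics `ẋ = -(x + y₀)`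
converge to `-y₀`, the induced slow dynamics `ẏ = -(9/10) y` converge to `0`, and the
limit `(0, 0)` is not a local Nash equilibrium. -/
theorem stmt_6 :
    (∀ y₀ : ℝ, ∀ x : ℝ → ℝ, Differentiable ℝ x →
      (∀ t : ℝ, 0 ≤ t → deriv x t = -(x t + y₀)) →
      Tendsto x atTop (nhds (-y₀))) ∧
    (∀ y : ℝ → ℝ, Differentiable ℝ y →
      (∀ t : ℝ, 0 ≤ t → deriv y t = -(9 / 10) * y t) →
      Tendsto y atTop (nhds 0)) ∧
    (∀ δ : ℝ, 0 < δ → ∃ y : ℝ, |y| < δ ∧ fCounter 0 y > fCounter 0 0) := by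
  refine ⟨?_, ?_, ?_⟩
  · intro y₀ x hx hode
    exact tendsto_of_deriv_eq_neg_mul_sub one_pos hx fun t ht => by rw [hode t ht]; ring
  · intro y hy hode
    exact tendsto_of_deriv_eq_neg_mul_sub (c := 9 / 10) (by norm_num) hy fun t ht => by rw [hode t ht]; ring
  · intro δ hδ
    refine ⟨δ / 2, by rw [abs_of_pos (half_pos hδ)]; linarith, ?_⟩
    norm_num [fCounter]
    positivity
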